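/- Consider the space X of all sum-free sets of positive natural numbers, viewed as a subspace of the Cantor space of all subsets of the positive natural numbers with the product topology. The set of S ∈ X such that the graph Γ(S) on the integers (distinct x, y adjacent iff |x − y| ∈ S) has the triangle-free extension property (equivalently, is isomorphic to Henson's graph H_3) is comeager (residual) in X. -/

import Mathlib

/-- The triangle-free extension property characterising Henson's graph `H₃`. -/
def SimpleGraph.HasTriangleFreeExtensionProperty {V : Type*} (Γ : SimpleGraph V) : Prop :=
  Γ.CliqueFree 3 ∧
  ∀ U W : Finset V, Disjoint U W → (∀ u ∈ U, ∀ v ∈ U, ¬ Γ.Adj u v) →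
    ∃ z, z ∉ U ∧ z ∉ W ∧ (∀ u ∈ U, Γ.Adj z u) ∧ (∀ w ∈ W, ¬ Γ.Adj z w)

/-- `f` codes a sum-free set of positive natural numbers. -/
def IsSumFreeCode (f : ℕ+ → Bool) : Prop :=
  ∀ x y z : ℕ+, f x = true → f y = true → f z = true → x + y ≠ z

/-- The space of sum-free sets of positive natural numbers, as a subspace of the
Cantor space `ℕ+ → Bool`. -/
abbrev SumFreeSpace : Type := {f : ℕ+ → Bool // IsSumFreeCode f}

/-- The graph `Γ(S)` on `ℤ` associated to the set `S` coded by `f`: distinct `x`, `y`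
are adjacent iff `|x - y| ∈ S`. -/
def diffGraphOfCode (f : ℕ+ → Bool) : SimpleGraph ℤ :=
  SimpleGraph.fromRel (fun x y =>
    ∃ h : x ≠ y, f ⟨(x - y).natAbs, Int.natAbs_pos.mpr (sub_ne_zero.mpr h)⟩ = true)

lemma adj_iff' (f : ℕ+ → Bool) {x y : ℤ} (h : x ≠ y) :
    (diffGraphOfCode f).Adj x y ↔
      f ⟨(x - y).natAbs, Int.natAbs_pos.mpr (sub_ne_zero.mpr h)⟩ = true := by
  unfold diffGraphOfCode
  rw [SimpleGraph.fromRel_adj]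
  constructor
  · rintro ⟨-, (⟨_, hf⟩ | ⟨_, hf⟩)⟩
    · exact hf
    · convert hf using 2
      exact congrArg f (Subtype.ext (show (x - y).natAbs = (y - x).natAbs by omega))
  · intro hf
    exact ⟨h, Or.inl ⟨h, hf⟩⟩

lemma cliqueFree_of_sumFree (f : ℕ+ → Bool) (hf : IsSumFreeCode f) :
    (diffGraphOfCode f).CliqueFree 3 := by
  intro t ht
  obtain ⟨a, b, c, hab, hac, hbc, rfl⟩ := Finset.card_eq_three.mp ht.card_eq
  have h1 : (diffGraphOfCode f).Adj a b := ht.1 (by simp) (by simp) hab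
  have h2 : (diffGraphOfCode f).Adj a c := ht.1 (by simp) (by simp) hac
  have h3 : (diffGraphOfCode f).Adj b c := ht.1 (by simp) (by simp) hbc
  rw [adj_iff' f hab] at h1
  rw [adj_iff' f hac] at h2
  rw [adj_iff' f hbc] at h3
  set d1 := (a - b).natAbs
  set d2 := (a - c).natAbs
  set d3 := (b - c).natAbs
  have key : d1 + d3 = d2 ∨ d1 + d2 = d3 ∨ d2 + d3 = d1 := by omega
  rcases key with hk | hk | hk
  · exact hf _ _ _ h1 h3 h2 (Subtype.ext (by push_cast; exact_mod_cast hk))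
  · exact hf _ _ _ h1 h2 h3 (Subtype.ext (by push_cast; exact_mod_cast hk))
  · exact hf _ _ _ h2 h3 h1 (Subtype.ext (by push_cast; exact_mod_cast hk))

lemma isClopen_coord (c : ℕ+) (b : Bool) : IsClopen {f : SumFreeSpace | f.val c = b} := by
  have hc : Continuous (fun f : SumFreeSpace => f.val c) :=
    (continuous_apply c).comp continuous_subtype_val
  exact (isClopen_discrete {b}).preimage hc

lemma isClopen_adjSet (x y : ℤ) :
    IsClopen {f : SumFreeSpace | (diffGraphOfCode f.val).Adj x y} := by
  by_cases h : x = y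
  · subst h
    have : {f : SumFreeSpace | (diffGraphOfCode f.val).Adj x x} = ∅ := by
      ext f; simp
    rw [this]; exact isClopen_empty
  · have : {f : SumFreeSpace | (diffGraphOfCode f.val).Adj x y} =
        {f : SumFreeSpace | f.val ⟨(x - y).natAbs, Int.natAbs_pos.mpr (sub_ne_zero.mpr h)⟩ = true} := by
      ext f; exact adj_iff' f.val h
    rw [this]; exact isClopen_coord _ true

/-- The basic open-dense condition set. -/
def extSet (U W : Finset ℤ) : Set SumFreeSpace :=
  {f | Disjoint U W → (∀ u ∈ U, ∀ v ∈ U, ¬ (diffGraphOfCode f.val).Adj u v) →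
    ∃ z, z ∉ U ∧ z ∉ W ∧ (∀ u ∈ U, (diffGraphOfCode f.val).Adj z u) ∧
      (∀ w ∈ W, ¬ (diffGraphOfCode f.val).Adj z w)}

lemma isOpen_extSet (U W : Finset ℤ) : IsOpen (extSet U W) := by
  have hrw : extSet U W =
      {f : SumFreeSpace | ¬ Disjoint U W} ∪
      (⋃ u ∈ U, ⋃ v ∈ U, {f : SumFreeSpace | (diffGraphOfCode f.val).Adj u v}) ∪
      ⋃ z : ℤ, {f : SumFreeSpace | z ∉ U ∧ z ∉ W ∧
        (∀ u ∈ U, (diffGraphOfCode f.val).Adj z u) ∧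
        (∀ w ∈ W, ¬ (diffGraphOfCode f.val).Adj z w)} := by
    ext f
    simp only [extSet, Set.mem_setOf_eq, Set.mem_union, Set.mem_iUnion, Set.mem_setOf_eq]
    constructor
    · intro h
      by_cases hd : Disjoint U W
      · by_cases hi : ∀ u ∈ U, ∀ v ∈ U, ¬ (diffGraphOfCode f.val).Adj u v
        · obtain ⟨z, hz⟩ := h hd hi
          exact Or.inr ⟨z, hz⟩
        · push_neg at hi
          obtain ⟨u, hu, v, hv, hadj⟩ := hi
          exact Or.inl (Or.inr ⟨u, hu, v, hv, hadj⟩)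
      · exact Or.inl (Or.inl hd)
    · rintro ((hd | ⟨u, hu, v, hv, hadj⟩) | ⟨z, hz⟩)
      · exact fun h => absurd h hd
      · exact fun _ hi => absurd hadj (hi u hu v hv)
      · exact fun _ _ => ⟨z, hz⟩
  rw [hrw]
  apply IsOpen.union
  apply IsOpen.union
  · by_cases hd : Disjoint U W
    · convert isOpen_empty
      ext f; simp [hd]
    · convert isOpen_univ
      ext f; simp [hd]
  · exact isOpen_biUnion fun u _ => isOpen_biUnion fun v _ => (isClopen_adjSet u v).isOpen
  · refine isOpen_iUnion fun z => ?_
    by_cases hz : z ∉ U ∧ z ∉ W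
    · have : {f : SumFreeSpace | z ∉ U ∧ z ∉ W ∧
          (∀ u ∈ U, (diffGraphOfCode f.val).Adj z u) ∧
          (∀ w ∈ W, ¬ (diffGraphOfCode f.val).Adj z w)} =
          (⋂ u ∈ U, {f : SumFreeSpace | (diffGraphOfCode f.val).Adj z u}) ∩
          (⋂ w ∈ W, {f : SumFreeSpace | (diffGraphOfCode f.val).Adj z w}ᶜ) := by
        ext f
        simp only [Set.mem_setOf_eq, Set.mem_inter_iff, Set.mem_iInter, Set.mem_compl_iff]
        tauto
      rw [this]
      exact ((isClopen_biInter_finset fun u _ => isClopen_adjSet z u).inter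
        (isClopen_biInter_finset fun w _ => (isClopen_adjSet z w).compl)).isOpen
    · convert isOpen_empty
      ext f
      simp only [Set.mem_setOf_eq, Set.mem_empty_iff_false, iff_false]
      tauto


lemma dense_extSet (U W : Finset ℤ) : Dense (extSet U W) := by
  rw [dense_iff_inter_open]
  rintro V hV ⟨f, hfV⟩
  obtain ⟨V', hV', rfl⟩ := isOpen_induced_iff.mp hV
  have hfV' : f.val ∈ V' := hfV
  obtain ⟨I, uS, h1, h2⟩ := isOpen_pi_iff.mp hV' f.val hfV'
  set N : ℕ := I.sup (fun p => (p : ℕ)) with hN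
  set M : ℕ := (U ∪ W).sup Int.natAbs with hM
  have hMU : ∀ u ∈ U, u.natAbs ≤ M := fun u hu =>
    Finset.le_sup (Finset.mem_union_left W hu)
  have hMW : ∀ w ∈ W, w.natAbs ≤ M := fun w hw =>
    Finset.le_sup (Finset.mem_union_right U hw)
  set L : ℤ := 2 * (N : ℤ) + 4 * (M : ℤ) + 1 with hL
  by_cases hbad : ∃ u ∈ U, ∃ v ∈ U, ∃ h : u ≠ v, (u - v).natAbs ≤ N ∧
      f.val ⟨(u - v).natAbs, Int.natAbs_pos.mpr (sub_ne_zero.mpr h)⟩ = true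
  · -- truncate: U will fail to be independent
    obtain ⟨u, hu, v, hv, huv, hle, hf⟩ := hbad
    set g : ℕ+ → Bool := fun p => if (p : ℕ) ≤ N then f.val p else false with hg
    have hsub : ∀ p, g p = true → f.val p = true := by
      intro p hp
      by_cases h : (p : ℕ) ≤ N
      · simpa [hg, h] using hp
      · simp [hg, h] at hp
    have hsf : IsSumFreeCode g := fun x y s hx hy hs =>
      f.prop x y s (hsub x hx) (hsub y hy) (hsub s hs)
    have hagree : ∀ a ∈ I, g a = f.val a := by
      intro a ha
      have : (a : ℕ) ≤ N := Finset.le_sup (f := fun p : ℕ+ => (p : ℕ)) ha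
      simp [hg, this]
    refine ⟨⟨g, hsf⟩, ?_, ?_⟩
    · exact h2 fun a ha => by
        show g a ∈ uS a
        rw [hagree a ha]
        exact (h1 a ha).2
    · intro _ hind
      exfalso
      apply hind u hu v hv
      rw [adj_iff' g huv]
      show (if ((u - v).natAbs : ℕ) ≤ N then
        f.val ⟨(u - v).natAbs, Int.natAbs_pos.mpr (sub_ne_zero.mpr huv)⟩ else false) = true
      rw [if_pos hle]
      exact hf
  · -- add the new differences L - u
    set g : ℕ+ → Bool := fun p =>
      if (p : ℕ) ≤ N then f.val p
      else decide (((p : ℕ) : ℤ) ∈ U.image (fun u => L - u)) with hg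
    have hgtrue : ∀ (n : ℕ) (hn : 0 < n), g ⟨n, hn⟩ = true ↔
        ((n ≤ N ∧ f.val ⟨n, hn⟩ = true) ∨
          (N < n ∧ ∃ u ∈ U, L - u = (n : ℤ))) := by
      intro n hn
      by_cases h : n ≤ N <;> simp [hg, h, Finset.mem_image] <;>
        exact ⟨fun h' => ⟨by omega, @of_decide_eq_true _ _ h'⟩, fun h' => @decide_eq_true _ _ h'.2⟩
    have hsf : IsSumFreeCode g := by
      intro x y s hx hy hs heq
      have hn : (x : ℕ) + (y : ℕ) = (s : ℕ) := by
        exact_mod_cast congrArg (fun t : ℕ+ => (t : ℕ)) heq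
      have hx1 : 1 ≤ (x : ℕ) := x.2
      have hy1 : 1 ≤ (y : ℕ) := y.2
      replace hx := (hgtrue (x : ℕ) x.pos).mp hx
      replace hy := (hgtrue (y : ℕ) y.pos).mp hy
      replace hs := (hgtrue (s : ℕ) s.pos).mp hs
      rcases hx with ⟨hxN, hxf⟩ | ⟨hxN, ux, hux, hzx⟩
      · rcases hy with ⟨hyN, hyf⟩ | ⟨hyN, uy, huy, hzy⟩
        · rcases hs with ⟨hsN, hsf'⟩ | ⟨hsN, us, hus, hzs⟩
          · exact f.prop x y s hxf hyf hsf' heq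
          · have := hMU us hus
            omega
        · -- x small, y big, so s big
          rcases hs with ⟨hsN, hsf'⟩ | ⟨hsN, us, hus, hzs⟩
          · omega
          · have h1' := hMU uy huy
            have h2' := hMU us hus
            have hxe : (uy : ℤ) - us = ((x : ℕ) : ℤ) := by omega
            have hne : uy ≠ us := by
              intro h
              subst h
              omega
            refine hbad ⟨uy, huy, us, hus, hne, by omega, ?_⟩
            have hxeq : (⟨(uy - us).natAbs,
                Int.natAbs_pos.mpr (sub_ne_zero.mpr hne)⟩ : ℕ+) = ⟨(x : ℕ), x.2⟩ :=
              Subtype.ext (show (uy - us).natAbs = (x : ℕ) by omega)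
            rw [hxeq]
            exact hxf
      · rcases hy with ⟨hyN, hyf⟩ | ⟨hyN, uy, huy, hzy⟩
        · -- x big, y small, so s big
          rcases hs with ⟨hsN, hsf'⟩ | ⟨hsN, us, hus, hzs⟩
          · omega
          · have h1' := hMU ux hux
            have h2' := hMU us hus
            have hye : (ux : ℤ) - us = ((y : ℕ) : ℤ) := by omega
            have hne : ux ≠ us := by
              intro h
              subst h
              omega
            refine hbad ⟨ux, hux, us, hus, hne, by omega, ?_⟩
            have hyeq : (⟨(ux - us).natAbs,
                Int.natAbs_pos.mpr (sub_ne_zero.mpr hne)⟩ : ℕ+) = ⟨(y : ℕ), y.2⟩ :=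
              Subtype.ext (show (ux - us).natAbs = (y : ℕ) by omega)
            rw [hyeq]
            exact hyf
        · -- x, y both big: too large
          have h1' := hMU ux hux
          have h2' := hMU uy huy
          rcases hs with ⟨hsN, hsf'⟩ | ⟨hsN, us, hus, hzs⟩
          · omega
          · have h3' := hMU us hus
            omega
    have hagree : ∀ a ∈ I, g a = f.val a := by
      intro a ha
      have : (a : ℕ) ≤ N := Finset.le_sup (f := fun p : ℕ+ => (p : ℕ)) ha
      simp [hg, this]
    refine ⟨⟨g, hsf⟩, ?_, ?_⟩
    · exact h2 fun a ha => by
        show g a ∈ uS a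
        rw [hagree a ha]
        exact (h1 a ha).2
    · intro hd _
      refine ⟨L, ?_, ?_, ?_, ?_⟩
      · intro hLU
        have := hMU L hLU
        omega
      · intro hLW
        have := hMW L hLW
        omega
      · intro u hu
        have hub := hMU u hu
        have hne : L ≠ u := by omega
        rw [adj_iff' g hne, hgtrue]
        right
        refine ⟨by omega, u, hu, by omega⟩
      · intro w hw hadj
        have hwb := hMW w hw
        have hne : L ≠ w := by omega
        rw [adj_iff' g hne, hgtrue] at hadj
        rcases hadj with ⟨hle, -⟩ | ⟨-, u', hu', he⟩
        · omega
        · have hub := hMU u' hu'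
          have : u' = w := by omega
          subst this
          exact (Finset.disjoint_left.mp hd hu') hw

/-- The set of sum-free sets `S` for which `Γ(S)` has the triangle-free extension
property (i.e. is isomorphic to Henson's graph `H₃`) is comeager in the space of all
sum-free sets of positive natural numbers. -/
theorem universal_sumFree_residual :
    {f : SumFreeSpace | (diffGraphOfCode f.val).HasTriangleFreeExtensionProperty} ∈
      residual SumFreeSpace := by
  have hmem : (⋂ p : Finset ℤ × Finset ℤ, extSet p.1 p.2) ∈ residual SumFreeSpace :=
    countable_iInter_mem.mpr fun p =>
      residual_of_dense_open (isOpen_extSet p.1 p.2) (dense_extSet p.1 p.2)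
  refine Filter.mem_of_superset hmem ?_
  intro f hf
  refine ⟨cliqueFree_of_sumFree f.val f.prop, ?_⟩
  intro U W hd hind
  exact Set.mem_iInter.mp hf (U, W) hd hind
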